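/- arXiv:2603.22807 — 5 statements merged into one kernel-verified Lean document; each statement's English description precedes it below -/
import Mathlib

section
/- (Theorem B, positive-tilt case.) For every real λ > 0, the covariance of x and x² under the exponentially tilted Wigner semicircle measure is strictly positive: Cov_λ(x, x²) = E_λ[x³] − E_λ[x]·E_λ[x²] > 0. -/
open intervalIntegral

/-- The exponentially tilted Wigner semicircle weight on `[-1,1]`. -/
noncomputable def tiltW (lam x : ℝ) : ℝ := Real.sqrt (1 - x ^ 2) * Real.exp (lam * x)

/-- The normalization constant `Z(λ)`. -/
noncomputable def tiltZ (lam : ℝ) : ℝ := ∫ x in (-1 : ℝ)..1, tiltW lam x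

/-- The mean `E_λ[f]` under the tilted semicircle measure. -/
noncomputable def tiltE (lam : ℝ) (f : ℝ → ℝ) : ℝ :=
  (tiltZ lam)⁻¹ * ∫ x in (-1 : ℝ)..1, f x * tiltW lam x

/-- The covariance `Cov_λ(f, g)` under the tilted semicircle measure. -/
noncomputable def tiltCov (lam : ℝ) (f g : ℝ → ℝ) : ℝ :=
  tiltE lam (fun x => f x * g x) - tiltE lam f * tiltE lam g

/-!
Symmetrising in two independent copies gives
`2 Z(λ)² Cov_λ(f, g) = ∬ (f x - f y) (g x - g y) w_λ(x) w_λ(y) dx dy`.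
The reflection `x ↦ -x` maps `w_λ` to `w_{-λ}` and shows `Cov_{-λ}(x, x²) = -Cov_λ(x, x²)`;
subtracting the two double integrals and using `w_λ(x) w_λ(y) - w_{-λ}(x) w_{-λ}(y)
= 2 sinh(λ(x + y)) √(1 - x²) √(1 - y²)` yields
`2 Z(λ)² Cov_λ(x, x²) = ∬ (x - y)² (x + y) sinh(λ(x + y)) √(1 - x²) √(1 - y²) dx dy`,
whose integrand is nonnegative for `λ > 0` and continuous and positive at `(0, 1/2)`.
-/

open MeasureTheory Set

theorem integral_prod_sub_mul_sub {α : Type*} [MeasurableSpace α] {μ : Measure α} [SFinite μ]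
    {f g w : α → ℝ} (hw : Integrable w μ) (hfw : Integrable (fun x => f x * w x) μ)
    (hgw : Integrable (fun x => g x * w x) μ) (hfgw : Integrable (fun x => f x * g x * w x) μ) :
    ∫ z, (f z.1 - f z.2) * (g z.1 - g z.2) * (w z.1 * w z.2) ∂μ.prod μ =
      2 * ((∫ x, w x ∂μ) * (∫ x, f x * g x * w x ∂μ) -
        (∫ x, f x * w x ∂μ) * ∫ x, g x * w x ∂μ) := by
  have hexpand : ∀ z : α × α, (f z.1 - f z.2) * (g z.1 - g z.2) * (w z.1 * w z.2) =
      f z.1 * g z.1 * w z.1 * w z.2 - f z.1 * w z.1 * (g z.2 * w z.2)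
        - g z.1 * w z.1 * (f z.2 * w z.2) + w z.1 * (f z.2 * g z.2 * w z.2) := fun z => by ring
  simp_rw [hexpand]
  have h1 := hfgw.mul_prod hw
  have h2 := hfw.mul_prod hgw
  have h3 := hgw.mul_prod hfw
  rw [integral_add ?_ (hw.mul_prod hfgw), integral_sub ?_ h3, integral_sub h1 h2,
    integral_prod_mul (fun x => f x * g x * w x) w,
    integral_prod_mul (fun x => f x * w x) (fun x => g x * w x),
    integral_prod_mul (fun x => g x * w x) (fun x => f x * w x),
    integral_prod_mul w (fun x => f x * g x * w x)]
  · ring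
  · exact h1.sub h2
  · exact (h1.sub h2).sub h3

theorem Continuous.integrable_prod_restrict_Ioc {F : ℝ × ℝ → ℝ} (hF : Continuous F)
    (a b c d : ℝ) :
    Integrable F ((volume.restrict (Ioc a b)).prod (volume.restrict (Ioc c d))) := by
  rw [Measure.prod_restrict, ← Measure.volume_eq_prod]
  exact (hF.continuousOn.integrableOn_compact (isCompact_Icc.prod isCompact_Icc)).mono_set
    (prod_mono Ioc_subset_Icc_self Ioc_subset_Icc_self)

theorem integral_prod_restrict_Ioc_pos {F : ℝ × ℝ → ℝ} (hF : Continuous F) (hF0 : 0 ≤ F)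
    {a b : ℝ} {z₀ : ℝ × ℝ} (hz₀ : z₀ ∈ Ioo a b ×ˢ Ioo a b) (hpos : 0 < F z₀) :
    0 < ∫ z, F z ∂(volume.restrict (Ioc a b)).prod (volume.restrict (Ioc a b)) := by
  rw [integral_pos_iff_support_of_nonneg hF0 (hF.integrable_prod_restrict_Ioc a b a b),
    Measure.prod_restrict, ← Measure.volume_eq_prod,
    Measure.restrict_apply' (measurableSet_Ioc.prod measurableSet_Ioc)]
  have hU : IsOpen (Function.support F ∩ Ioo a b ×ˢ Ioo a b) :=
    hF.isOpen_support.inter (isOpen_Ioo.prod isOpen_Ioo)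
  calc 0 < volume (Function.support F ∩ Ioo a b ×ˢ Ioo a b) :=
        hU.measure_pos volume ⟨z₀, hpos.ne', hz₀⟩
    _ ≤ _ := measure_mono (inter_subset_inter_right _
        (prod_mono Ioo_subset_Ioc_self Ioo_subset_Ioc_self))

theorem Real.mul_sinh_mul_nonneg {lam : ℝ} (hlam : 0 ≤ lam) (t : ℝ) :
    0 ≤ t * Real.sinh (lam * t) := by
  rcases le_total 0 t with ht | ht
  · exact mul_nonneg ht (Real.sinh_nonneg_iff.2 (mul_nonneg hlam ht))
  · exact mul_nonneg_of_nonpos_of_nonpos ht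
      (Real.sinh_nonpos_iff.2 (mul_nonpos_of_nonneg_of_nonpos hlam ht))

@[fun_prop]
theorem continuous_tiltW (lam : ℝ) : Continuous (tiltW lam) := by
  unfold tiltW
  fun_prop

theorem tiltZ_pos (lam : ℝ) : 0 < tiltZ lam :=
  intervalIntegral.intervalIntegral_pos_of_pos_on ((continuous_tiltW lam).intervalIntegrable _ _)
    (fun _ hx => mul_pos (Real.sqrt_pos.2 (by nlinarith [hx.1, hx.2])) (Real.exp_pos _))
    (by norm_num)

theorem tiltW_neg_lam (lam x : ℝ) : tiltW (-lam) x = tiltW lam (-x) := by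
  simp only [tiltW, neg_sq, neg_mul, mul_neg]

theorem integral_mul_tiltW_neg_lam (lam : ℝ) (f : ℝ → ℝ) :
    ∫ x in (-1 : ℝ)..1, f x * tiltW (-lam) x = ∫ x in (-1 : ℝ)..1, f (-x) * tiltW lam x := by
  simpa [tiltW_neg_lam] using
    (intervalIntegral.integral_comp_neg (fun x => f (-x) * tiltW lam x) (a := -1) (b := 1))

theorem tiltZ_neg_lam (lam : ℝ) : tiltZ (-lam) = tiltZ lam := by
  simpa [tiltZ] using integral_mul_tiltW_neg_lam lam 1

theorem tiltE_neg_lam (lam : ℝ) (f : ℝ → ℝ) : tiltE (-lam) f = tiltE lam (fun x => f (-x)) := by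
  rw [tiltE, tiltE, tiltZ_neg_lam, integral_mul_tiltW_neg_lam]

theorem tiltE_neg (lam : ℝ) (f : ℝ → ℝ) : tiltE lam (fun x => -f x) = -tiltE lam f := by
  simp [tiltE, intervalIntegral.integral_neg]

theorem tiltCov_neg_lam (lam : ℝ) (f g : ℝ → ℝ) :
    tiltCov (-lam) f g = tiltCov lam (fun x => f (-x)) (fun x => g (-x)) := by
  simp only [tiltCov, tiltE_neg_lam]

theorem tiltCov_neg_left (lam : ℝ) (f g : ℝ → ℝ) :
    tiltCov lam (fun x => -f x) g = -tiltCov lam f g := by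
  simp only [tiltCov, neg_mul, tiltE_neg]
  ring

theorem tiltCov_neg_lam_id_sq (lam : ℝ) :
    tiltCov (-lam) (fun x => x) (fun x => x ^ 2) = -tiltCov lam (fun x => x) (fun x => x ^ 2) := by
  rw [tiltCov_neg_lam, ← tiltCov_neg_left]
  simp only [neg_sq]

section ProductRepresentation

local notation "ν" => volume.restrict (Ioc (-1 : ℝ) 1)

theorem tiltCov_eq_integral_prod (lam : ℝ) {f g : ℝ → ℝ} (hf : Continuous f) (hg : Continuous g) :
    tiltCov lam f g = (2 * tiltZ lam ^ 2)⁻¹ *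
      ∫ z, (f z.1 - f z.2) * (g z.1 - g z.2) * (tiltW lam z.1 * tiltW lam z.2) ∂Measure.prod ν ν := by
  have hw := continuous_tiltW lam
  rw [integral_prod_sub_mul_sub hw.integrableOn_Ioc (hf.mul hw).integrableOn_Ioc
    (hg.mul hw).integrableOn_Ioc ((hf.mul hg).mul hw).integrableOn_Ioc]
  have hZ := (tiltZ_pos lam).ne'
  simp only [tiltCov, tiltE]
  simp only [tiltZ, intervalIntegral.integral_of_le (show (-1 : ℝ) ≤ 1 by norm_num)] at hZ ⊢
  field_simp

theorem tiltW_mul_tiltW_sub_tiltW_neg_lam_mul (lam x y : ℝ) :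
    tiltW lam x * tiltW lam y - tiltW (-lam) x * tiltW (-lam) y =
      2 * (Real.sinh (lam * (x + y)) * (Real.sqrt (1 - x ^ 2) * Real.sqrt (1 - y ^ 2))) := by
  rw [Real.sinh_eq, mul_add, neg_add, Real.exp_add, Real.exp_add]
  simp only [tiltW, neg_mul]
  ring

theorem tiltCov_sub_tiltCov_neg_lam (lam : ℝ) {f g : ℝ → ℝ} (hf : Continuous f)
    (hg : Continuous g) :
    tiltCov lam f g - tiltCov (-lam) f g = (tiltZ lam ^ 2)⁻¹ *
      ∫ z, (f z.1 - f z.2) * (g z.1 - g z.2) *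
        (Real.sinh (lam * (z.1 + z.2)) * (Real.sqrt (1 - z.1 ^ 2) * Real.sqrt (1 - z.2 ^ 2)))
        ∂Measure.prod ν ν := by
  rw [tiltCov_eq_integral_prod lam hf hg, tiltCov_eq_integral_prod (-lam) hf hg, tiltZ_neg_lam,
    ← mul_sub, ← integral_sub (Continuous.integrable_prod_restrict_Ioc (by fun_prop) _ _ _ _)
      (Continuous.integrable_prod_restrict_Ioc (by fun_prop) _ _ _ _)]
  simp_rw [← mul_sub, tiltW_mul_tiltW_sub_tiltW_neg_lam_mul, mul_left_comm _ (2 : ℝ),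
    MeasureTheory.integral_const_mul]
  ring

theorem integral_sub_mul_sq_sub_mul_sinh_pos {lam : ℝ} (hlam : 0 < lam) :
    0 < ∫ z, (z.1 - z.2) * (z.1 ^ 2 - z.2 ^ 2) *
      (Real.sinh (lam * (z.1 + z.2)) * (Real.sqrt (1 - z.1 ^ 2) * Real.sqrt (1 - z.2 ^ 2)))
      ∂Measure.prod ν ν := by
  have hfactor : ∀ x y : ℝ, (x - y) * (x ^ 2 - y ^ 2) *
      (Real.sinh (lam * (x + y)) * (Real.sqrt (1 - x ^ 2) * Real.sqrt (1 - y ^ 2))) =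
      (x - y) ^ 2 * ((x + y) * Real.sinh (lam * (x + y))) *
        (Real.sqrt (1 - x ^ 2) * Real.sqrt (1 - y ^ 2)) := fun x y => by ring
  have hnonneg : ∀ x y : ℝ, 0 ≤ (x - y) ^ 2 * ((x + y) * Real.sinh (lam * (x + y))) *
      (Real.sqrt (1 - x ^ 2) * Real.sqrt (1 - y ^ 2)) := fun x y =>
    mul_nonneg (mul_nonneg (sq_nonneg _) (Real.mul_sinh_mul_nonneg hlam.le _))
      (mul_nonneg (Real.sqrt_nonneg _) (Real.sqrt_nonneg _))
  simp_rw [hfactor]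
  refine integral_prod_restrict_Ioc_pos (by fun_prop) (fun z => hnonneg z.1 z.2)
    (z₀ := (0, 1 / 2)) ⟨⟨by norm_num, by norm_num⟩, ⟨by norm_num, by norm_num⟩⟩ ?_
  have hsinh : 0 < Real.sinh (lam * (0 + 1 / 2)) := Real.sinh_pos_iff.2 (by positivity)
  exact mul_pos (mul_pos (by norm_num) (mul_pos (by norm_num) hsinh))
    (mul_pos (Real.sqrt_pos.2 (by norm_num)) (Real.sqrt_pos.2 (by norm_num)))

end ProductRepresentation

/-- Theorem B (positive-tilt case): for every `λ > 0`,
`Cov_λ(x, x²) > 0` under the exponentially tilted Wigner semicircle measure. -/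
theorem tiltCov_x_xsq_pos (lam : ℝ) (hlam : 0 < lam) :
    0 < tiltCov lam (fun x => x) (fun x => x ^ 2) := by
  have hdiff := tiltCov_sub_tiltCov_neg_lam lam (f := fun x => x) (g := fun x => x ^ 2)
    continuous_id' (continuous_pow 2)
  rw [tiltCov_neg_lam_id_sq] at hdiff
  have hpos := mul_pos (inv_pos.2 (pow_pos (tiltZ_pos lam) 2))
    (integral_sub_mul_sq_sub_mul_sinh_pos hlam)
  linarith
end

section
/- (Bessel recurrence I₀′ = I₁ in integral form.) For every real z, the function B₀ is differentiable at z with derivative z·B₁(z): HasDerivAt B₀ (z·B₁(z)) z. Equivalently, ∫_{−1}^{1} t·e^{zt}·(1 − t²)^{−1/2} dt = z·∫_{−1}^{1} e^{zt}·√(1 − t²) dt. -/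
/-!
Differentiating under the integral sign gives `B₀'(z) = ∫ t e^{zt} (1 - t²)^{-1/2} dt`; this is
legitimate because the weight `(1 - t²)^{-1/2}`, the derivative of `arcsin`, is integrable and
`t e^{xt}` is bounded uniformly for `t ∈ [-1, 1]` and `x` near `z`. Since
`t (1 - t²)^{-1/2} = -(d/dt) √(1 - t²)` and `√(1 - t²)` vanishes at `±1`, an integration by parts
turns this into `z ∫ e^{zt} √(1 - t²) dt = z B₁(z)`.
-/

open intervalIntegral

/-- `B₀(z) = ∫_{−1}^{1} e^{zt} (1 − t²)^{−1/2} dt`, so that `I₀(z) = B₀(z)/π`. -/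
noncomputable def B0 (z : ℝ) : ℝ :=
  ∫ t in (-1 : ℝ)..1, Real.exp (z * t) * (1 - t ^ 2) ^ (-(1 / 2) : ℝ)

/-- `B₁(z) = ∫_{−1}^{1} e^{zt} √(1 − t²) dt`, so that `I₁(z) = z·B₁(z)/π`. -/
noncomputable def B1 (z : ℝ) : ℝ :=
  ∫ t in (-1 : ℝ)..1, Real.exp (z * t) * Real.sqrt (1 - t ^ 2)

open Real Set MeasureTheory Filter Metric

lemma abs_le_abs_add_abs_of_mem_uIoc {a b t : ℝ} (ht : t ∈ uIoc a b) : |t| ≤ |a| + |b| := by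
  obtain ⟨h1, h2⟩ := uIoc_subset_uIcc ht
  rw [abs_le]
  constructor <;> cases le_total a b <;> simp_all <;>
    linarith [neg_abs_le a, neg_abs_le b, le_abs_self a, le_abs_self b]

lemma norm_mul_exp_mul_le {t x M R : ℝ} (ht : |t| ≤ M) (hx : |x| ≤ R) :
    ‖t * exp (x * t)‖ ≤ M * exp (R * M) := by
  have hxt : x * t ≤ R * M :=
    calc x * t ≤ |x| * |t| := by rw [← abs_mul]; exact le_abs_self _
      _ ≤ R * M := mul_le_mul hx ht (abs_nonneg t) ((abs_nonneg x).trans hx)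
  rw [norm_mul, norm_of_nonneg (exp_pos _).le, Real.norm_eq_abs]
  exact mul_le_mul ht (exp_le_exp.2 hxt) (exp_pos _).le ((abs_nonneg t).trans ht)

theorem hasDerivAt_integral_exp_mul_mul {μ : Measure ℝ} [IsLocallyFiniteMeasure μ] {w : ℝ → ℝ}
    {a b : ℝ} (hw : IntervalIntegrable w μ a b) (z : ℝ) :
    HasDerivAt (fun x => ∫ t in a..b, exp (x * t) * w t ∂μ)
      (∫ t in a..b, t * exp (z * t) * w t ∂μ) z := by
  have hint (x : ℝ) : IntervalIntegrable (fun t => exp (x * t) * w t) μ a b :=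
    hw.continuousOn_mul (by fun_prop)
  have hint' : IntervalIntegrable (fun t => t * exp (z * t) * w t) μ a b :=
    hw.continuousOn_mul (by fun_prop)
  refine (hasDerivAt_integral_of_dominated_loc_of_deriv_le (ball_mem_nhds z one_pos)
    (F' := fun x t => t * exp (x * t) * w t)
    (bound := fun t => (|a| + |b|) * exp ((|z| + 1) * (|a| + |b|)) * ‖w t‖)
    (Eventually.of_forall fun x => (hint x).aestronglyMeasurable_restrict_uIoc) (hint z)
    hint'.aestronglyMeasurable_restrict_uIoc ?_ (hw.norm.const_mul _) ?_).2
  · refine Eventually.of_forall fun t ht x hx => ?_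
    have hx' : |x| ≤ |z| + 1 := by
      rw [mem_ball, dist_eq] at hx
      linarith [abs_sub_abs_le_abs_sub x z]
    rw [norm_mul]
    exact mul_le_mul_of_nonneg_right
      (norm_mul_exp_mul_le (abs_le_abs_add_abs_of_mem_uIoc ht) hx') (norm_nonneg _)
  · refine Eventually.of_forall fun t _ x _ => ?_
    exact (((hasDerivAt_mul_const t).exp).mul_const (w t)).congr_deriv (by ring)

lemma rpow_neg_half_eq_inv_sqrt {x : ℝ} (hx : 0 ≤ x) : x ^ (-(1 / 2) : ℝ) = (√x)⁻¹ := by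
  rw [rpow_neg hx, sqrt_eq_rpow]

lemma one_sub_sq_pos_of_mem_Ioo {t : ℝ} (ht : t ∈ Ioo (-1) 1) : 0 < 1 - t ^ 2 := by
  nlinarith [ht.1, ht.2]

lemma hasDerivAt_arcsin_of_mem_Ioo {t : ℝ} (ht : t ∈ Ioo (-1) 1) :
    HasDerivAt arcsin ((1 - t ^ 2) ^ (-(1 / 2) : ℝ)) t := by
  rw [rpow_neg_half_eq_inv_sqrt (one_sub_sq_pos_of_mem_Ioo ht).le, inv_eq_one_div]
  exact hasDerivAt_arcsin ht.1.ne' ht.2.ne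

lemma intervalIntegrable_one_sub_sq_rpow_neg_half :
    IntervalIntegrable (fun t : ℝ => (1 - t ^ 2) ^ (-(1 / 2) : ℝ)) volume (-1) 1 := by
  refine intervalIntegrable_deriv_of_nonneg continuous_arcsin.continuousOn ?_ ?_
  all_goals norm_num only [min_eq_left, max_eq_right]
  · exact fun t ht => hasDerivAt_arcsin_of_mem_Ioo ht
  · exact fun t ht => rpow_nonneg (one_sub_sq_pos_of_mem_Ioo ht).le _

lemma hasDerivAt_sqrt_one_sub_sq {t : ℝ} (ht : t ∈ Ioo (-1) 1) :
    HasDerivAt (fun s => √(1 - s ^ 2)) (-t * (1 - t ^ 2) ^ (-(1 / 2) : ℝ)) t := by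
  have hpos := one_sub_sq_pos_of_mem_Ioo ht
  rw [rpow_neg_half_eq_inv_sqrt hpos.le]
  refine ((hasDerivAt_pow 2 t).const_sub 1).sqrt hpos.ne' |>.congr_deriv ?_
  field_simp
  ring

theorem integral_mul_exp_mul_one_sub_sq_rpow_neg_half (z : ℝ) :
    ∫ t in (-1 : ℝ)..1, t * exp (z * t) * (1 - t ^ 2) ^ (-(1 / 2) : ℝ) = z * B1 z := by
  set g : ℝ → ℝ := fun t => -(exp (z * t) * √(1 - t ^ 2))
  have hderiv : ∀ t ∈ Ioo (-1 : ℝ) 1, HasDerivAt g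
      (t * exp (z * t) * (1 - t ^ 2) ^ (-(1 / 2) : ℝ) - z * (exp (z * t) * √(1 - t ^ 2))) t :=
    fun t ht => (((hasDerivAt_const_mul z).exp).fun_mul
      (hasDerivAt_sqrt_one_sub_sq ht)).fun_neg.congr_deriv (by ring)
  have hint : IntervalIntegrable
      (fun t => t * exp (z * t) * (1 - t ^ 2) ^ (-(1 / 2) : ℝ)) volume (-1) 1 :=
    intervalIntegrable_one_sub_sq_rpow_neg_half.continuousOn_mul (by fun_prop)
  have hint₁ : IntervalIntegrable (fun t => z * (exp (z * t) * √(1 - t ^ 2))) volume (-1) 1 :=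
    (by fun_prop : Continuous _).intervalIntegrable _ _
  have hboundary : g 1 - g (-1) = 0 := by norm_num [g]
  have hftc := integral_eq_sub_of_hasDerivAt_of_le (by norm_num) (by fun_prop) hderiv
    (hint.sub hint₁)
  rw [integral_sub hint hint₁, intervalIntegral.integral_const_mul, hboundary, sub_eq_zero] at hftc
  rw [hftc, B1]

/-- Bessel recurrence `I₀′ = I₁` in integral form: `B₀` is differentiable at
every real `z` with derivative `z·B₁(z)`. -/
theorem hasDerivAt_B0 (z : ℝ) : HasDerivAt B0 (z * B1 z) z := by
  have h := hasDerivAt_integral_exp_mul_mul intervalIntegrable_one_sub_sq_rpow_neg_half z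
  rwa [integral_mul_exp_mul_one_sub_sq_rpow_neg_half] at h
end

section
/- (Bessel recurrence I₁′ = I₀ − I₁/z in integral form.) For every real z ≠ 0, the function B₁ is differentiable at z with derivative (B₀(z) − 2·B₁(z))/z: HasDerivAt B₁ ((B₀(z) − 2·B₁(z))/z) z. Equivalently, z·∫_{−1}^{1} t·e^{zt}·√(1 − t²) dt = ∫_{−1}^{1} e^{zt}·(1 − t²)^{−1/2} dt − 2·∫_{−1}^{1} e^{zt}·√(1 − t²) dt. -/
open intervalIntegral

/-!
Differentiating under the integral sign gives `B₁'(z) = ∫ t e^{zt} √(1 − t²) dt`.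
Since `(t √(1 − t²))' = 2 √(1 − t²) − 1 / √(1 − t²)` and `t √(1 − t²)` vanishes at `±1`,
integrating `e^{zt}` against this derivative by parts gives
`z ∫ t e^{zt} √(1 − t²) dt = B₀(z) − 2 B₁(z)`.
-/

open MeasureTheory Set Real

theorem hasDerivAt_intervalIntegral_of_continuous {E : Type*} [NormedAddCommGroup E]
    [NormedSpace ℝ E] {F F' : ℝ → ℝ → E}
    (hF : Continuous (Function.uncurry F)) (hF' : Continuous (Function.uncurry F'))
    (hderiv : ∀ x t, HasDerivAt (F · t) (F' x t) x) (a b z : ℝ) :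
    HasDerivAt (fun x ↦ ∫ t in a..b, F x t) (∫ t in a..b, F' z t) z := by
  obtain ⟨C, hC⟩ := ((isCompact_closedBall z 1).prod isCompact_uIcc).exists_bound_of_continuousOn
    hF'.continuousOn
  refine (hasDerivAt_integral_of_dominated_loc_of_deriv_le (bound := fun _ ↦ C)
    (Metric.closedBall_mem_nhds z one_pos)
    (.of_forall fun x ↦ (hF.uncurry_left x).aestronglyMeasurable)
    ((hF.uncurry_left z).intervalIntegrable a b) (hF'.uncurry_left z).aestronglyMeasurable
    (ae_of_all _ fun t ht x hx ↦ hC (x, t) ⟨hx, uIoc_subset_uIcc ht⟩)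
    intervalIntegrable_const (ae_of_all _ fun t _ x _ ↦ hderiv x t)).2

theorem Real.rpow_neg_half (x : ℝ) : x ^ (-(1 / 2) : ℝ) = (√x)⁻¹ := by
  rcases le_or_gt 0 x with hx | hx
  · rw [rpow_neg hx, sqrt_eq_rpow]
  · -- for `x < 0` both sides are junk values equal to `0`: `cos (-π/2) = 0` and `√x = 0`
    rw [rpow_def_of_neg hx, sqrt_eq_zero_of_nonpos hx.le, inv_zero, neg_mul, cos_neg,
      div_mul_eq_mul_div, one_mul, cos_pi_div_two, mul_zero]

theorem intervalIntegrable_inv_sqrt_one_sub_sq :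
    IntervalIntegrable (fun t : ℝ ↦ (√(1 - t ^ 2))⁻¹) volume (-1) 1 := by
  refine intervalIntegrable_deriv_of_nonneg (g := arcsin) continuous_arcsin.continuousOn
    (fun t ht ↦ ?_) (fun t _ ↦ by positivity)
  rw [min_eq_left (by norm_num), max_eq_right (by norm_num)] at ht
  simpa [one_div] using hasDerivAt_arcsin ht.1.ne' ht.2.ne

theorem hasDerivAt_mul_sqrt_one_sub_sq {t : ℝ} (ht : t ∈ Ioo (-1 : ℝ) 1) :
    HasDerivAt (fun t ↦ t * √(1 - t ^ 2)) (2 * √(1 - t ^ 2) - (√(1 - t ^ 2))⁻¹) t := by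
  have hpos : 0 < 1 - t ^ 2 := by nlinarith [ht.1, ht.2]
  have hsqrt := ((hasDerivAt_pow 2 t).const_sub 1).sqrt hpos.ne'
  refine ((hasDerivAt_id' t).mul hsqrt).congr_deriv ?_
  have hne : √(1 - t ^ 2) ≠ 0 := (sqrt_pos.2 hpos).ne'
  field_simp
  rw [sq_sqrt hpos.le]
  push_cast
  ring

theorem integral_deriv_mul_mul_sqrt_one_sub_sq {g g' : ℝ → ℝ}
    (hg : ContinuousOn g (Icc (-1) 1))
    (hderiv : ∀ t ∈ Ioo (-1 : ℝ) 1, HasDerivAt g (g' t) t)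
    (hg' : IntervalIntegrable g' volume (-1) 1) :
    ∫ t in (-1 : ℝ)..1, g' t * (t * √(1 - t ^ 2)) =
      (∫ t in (-1 : ℝ)..1, g t * (√(1 - t ^ 2))⁻¹) - 2 * ∫ t in (-1 : ℝ)..1, g t * √(1 - t ^ 2) := by
  have hIcc : uIcc (-1 : ℝ) 1 = Icc (-1) 1 := uIcc_of_le (by norm_num)
  have hIoo : Ioo (min (-1 : ℝ) 1) (max (-1) 1) = Ioo (-1) 1 := by norm_num
  have hsqrt_int : IntervalIntegrable (fun t : ℝ ↦ √(1 - t ^ 2)) volume (-1) 1 :=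
    (by fun_prop : Continuous fun t : ℝ ↦ √(1 - t ^ 2)).intervalIntegrable _ _
  have hparts := integral_mul_deriv_eq_deriv_mul_of_hasDerivAt (hIcc ▸ hg)
    (by fun_prop : Continuous fun t : ℝ ↦ t * √(1 - t ^ 2)).continuousOn (hIoo ▸ hderiv)
    (hIoo ▸ fun t ↦ hasDerivAt_mul_sqrt_one_sub_sq) hg'
    ((hsqrt_int.const_mul 2).sub intervalIntegrable_inv_sqrt_one_sub_sq)
  have hg_sqrt := hsqrt_int.continuousOn_mul (hIcc ▸ hg)
  have hg_inv := intervalIntegrable_inv_sqrt_one_sub_sq.continuousOn_mul (hIcc ▸ hg)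
  simp_rw [mul_sub, mul_left_comm _ (2 : ℝ)] at hparts
  rw [integral_sub (hg_sqrt.const_mul 2) hg_inv, intervalIntegral.integral_const_mul] at hparts
  norm_num at hparts
  linarith

/-- Bessel recurrence `I₁′ = I₀ − I₁/z` in integral form: for `z ≠ 0`, `B₁` is
differentiable at `z` with derivative `(B₀(z) − 2·B₁(z))/z`. -/
theorem hasDerivAt_B1 (z : ℝ) (hz : z ≠ 0) :
    HasDerivAt B1 ((B0 z - 2 * B1 z) / z) z := by
  have hderiv : HasDerivAt B1 (∫ t in (-1 : ℝ)..1, t * exp (z * t) * √(1 - t ^ 2)) z :=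
    hasDerivAt_intervalIntegral_of_continuous (F := fun x t ↦ exp (x * t) * √(1 - t ^ 2))
      (F' := fun x t ↦ t * exp (x * t) * √(1 - t ^ 2)) (by fun_prop) (by fun_prop)
      (fun x t ↦ by simpa [mul_comm, mul_assoc, mul_left_comm] using
        (((hasDerivAt_id x).mul_const t).exp).mul_const (√(1 - t ^ 2))) _ _ z
  have hparts := integral_deriv_mul_mul_sqrt_one_sub_sq (g := fun t ↦ exp (z * t))
    (g' := fun t ↦ z * exp (z * t)) (by fun_prop)
    (fun t _ ↦ by simpa [mul_comm] using ((hasDerivAt_id t).const_mul z).exp)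
    ((by fun_prop : Continuous fun t ↦ z * exp (z * t)).intervalIntegrable _ _)
  have hz_out : ∫ t in (-1 : ℝ)..1, z * exp (z * t) * (t * √(1 - t ^ 2)) =
      z * ∫ t in (-1 : ℝ)..1, t * exp (z * t) * √(1 - t ^ 2) := by
    rw [← intervalIntegral.integral_const_mul]
    congr 1 with t
    ring
  simp only [B0, B1, rpow_neg_half] at hparts ⊢
  rw [← hparts, hz_out, mul_div_cancel_left₀ _ hz]
  exact hderiv
end

section
/- (Taylor expansion of the tilted covariance at λ = 0.) The function λ ↦ Cov_λ(x, x²) vanishes at λ = 0 and is differentiable there with derivative 1/16: Cov_0(x, x²) = 0 and HasDerivAt (fun λ => Cov_λ(x, x²)) (1/16) 0. Equivalently, Cov_λ(x, x²)/λ → 1/16 as λ → 0 through nonzero values. -/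
open intervalIntegral

/-
Write `M n λ = ∫ x ^ n w_λ(x)`, so that `Cov_λ(x, x²) = M 3/M 0 - (M 1/M 0)(M 2/M 0)`.
Differentiating under the integral sign gives `∂_λ M n = M (n + 1)`. At `λ = 0` the weight is
even, so the odd moments vanish, while `x = sin θ` and the Wallis recursion give
`M 0 = π/2`, `M 2 = π/8`, `M 4 = π/16`. Hence `Cov_0 = 0` and its derivative at `0` is
`M 4/M 0 - (M 2/M 0)² = 1/8 - 1/16`.
-/

open Real MeasureTheory Set

theorem intervalIntegral.integral_neg_self_eq_zero_of_odd {f : ℝ → ℝ} (hf : Function.Odd f)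
    (a : ℝ) : ∫ x in -a..a, f x = 0 := by
  have h := integral_comp_neg (a := -a) (b := a) f
  rw [neg_neg] at h
  simp only [show ∀ x, f (-x) = -f x from hf, intervalIntegral.integral_neg] at h
  linarith

theorem hasDerivAt_integral_mul_exp_mul {f : ℝ → ℝ} {a b : ℝ} (hf : ContinuousOn f (uIcc a b))
    (lam₀ : ℝ) :
    HasDerivAt (fun lam => ∫ x in a..b, f x * exp (lam * x))
      (∫ x in a..b, x * f x * exp (lam₀ * x)) lam₀ := by
  have hF : ∀ lam, ContinuousOn (fun x => f x * exp (lam * x)) (uIcc a b) := fun lam =>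
    hf.mul (by fun_prop)
  have hF' : ContinuousOn (fun p : ℝ × ℝ => p.2 * f p.2 * exp (p.1 * p.2))
      (Metric.closedBall lam₀ 1 ×ˢ uIcc a b) :=
    ((continuousOn_snd.mul (hf.comp continuousOn_snd fun p hp => hp.2)).mul (by fun_prop))
  -- the `λ`-derivative of the integrand is dominated by its bound on a compact neighbourhood
  obtain ⟨C, hC⟩ :=
    ((isCompact_closedBall lam₀ 1).prod isCompact_uIcc).exists_bound_of_continuousOn hF'
  refine (hasDerivAt_integral_of_dominated_loc_of_deriv_le (bound := fun _ => C)
    (F' := fun lam x => x * f x * exp (lam * x))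
    (Metric.ball_mem_nhds lam₀ one_pos)
    (Filter.Eventually.of_forall fun lam =>
      ((hF lam).mono uIoc_subset_uIcc).aestronglyMeasurable measurableSet_uIoc)
    ((hF lam₀).intervalIntegrable)
    (((hF'.comp (Continuous.continuousOn (by fun_prop : Continuous fun x : ℝ => (lam₀, x)))
      fun x hx => ⟨Metric.mem_closedBall_self zero_le_one, hx⟩).mono
        uIoc_subset_uIcc).aestronglyMeasurable measurableSet_uIoc)
    ?_ intervalIntegrable_const ?_).2
  · refine ae_of_all _ fun x hx lam hlam => ?_
    exact hC (lam, x) ⟨Metric.ball_subset_closedBall hlam, uIoc_subset_uIcc hx⟩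
  · refine ae_of_all _ fun x _ lam _ => ?_
    exact ((hasDerivAt_mul_const x).exp.const_mul (f x)).congr_deriv (by ring)

theorem integral_sin_pow_add_two_neg_pi_div_two (n : ℕ) :
    ∫ θ in -(π / 2)..π / 2, sin θ ^ (n + 2) =
      (n + 1) / (n + 2) * ∫ θ in -(π / 2)..π / 2, sin θ ^ n := by
  simp [integral_sin_pow]

theorem integral_pow_mul_sqrt_one_sub_sq (n : ℕ) :
    ∫ x in (-1 : ℝ)..1, x ^ n * √(1 - x ^ 2) =
      (∫ θ in -(π / 2)..π / 2, sin θ ^ n) / (n + 2) := by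
  calc ∫ x in (-1 : ℝ)..1, x ^ n * √(1 - x ^ 2)
      = ∫ x in sin (-(π / 2))..sin (π / 2), x ^ n * √(1 - x ^ 2) := by simp
    _ = ∫ θ in -(π / 2)..π / 2, sin θ ^ n * √(1 - sin θ ^ 2) * cos θ :=
        (integral_comp_mul_deriv (fun θ _ => hasDerivAt_sin θ) continuousOn_cos
          (by fun_prop)).symm
    _ = ∫ θ in -(π / 2)..π / 2, (sin θ ^ n - sin θ ^ (n + 2)) := by
        refine integral_congr fun θ hθ => ?_
        rw [uIcc_of_le (by linarith [pi_pos])] at hθ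
        rw [← cos_eq_sqrt_one_sub_sin_sq hθ.1 hθ.2]
        linear_combination sin θ ^ n * sin_sq_add_cos_sq θ
    _ = (∫ θ in -(π / 2)..π / 2, sin θ ^ n) / (n + 2) := by
        rw [intervalIntegral.integral_sub (by apply Continuous.intervalIntegrable; fun_prop)
          (by apply Continuous.intervalIntegrable; fun_prop),
          integral_sin_pow_add_two_neg_pi_div_two]
        field_simp
        ring

noncomputable def tiltMoment (n : ℕ) (lam : ℝ) : ℝ :=
  ∫ x in (-1 : ℝ)..1, x ^ n * tiltW lam x

theorem hasDerivAt_tiltMoment (n : ℕ) (lam : ℝ) :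
    HasDerivAt (tiltMoment n) (tiltMoment (n + 1) lam) lam := by
  have h := hasDerivAt_integral_mul_exp_mul (f := fun x => x ^ n * √(1 - x ^ 2))
    (a := -1) (b := 1) (by fun_prop) lam
  convert h using 1
  · funext l
    simp only [tiltMoment, tiltW, mul_assoc]
  · refine integral_congr fun x _ => ?_
    simp only [tiltW]
    ring

theorem tiltMoment_apply_zero (n : ℕ) :
    tiltMoment n 0 = ∫ x in (-1 : ℝ)..1, x ^ n * √(1 - x ^ 2) := by
  simp [tiltMoment, tiltW]

theorem tiltMoment_odd_zero {n : ℕ} (hn : Odd n) : tiltMoment n 0 = 0 := by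
  rw [tiltMoment_apply_zero]
  exact integral_neg_self_eq_zero_of_odd (fun x => by simp [hn.neg_pow]) 1

theorem tiltMoment_zero_zero : tiltMoment 0 0 = π / 2 := by
  rw [tiltMoment_apply_zero, integral_pow_mul_sqrt_one_sub_sq]
  norm_num

theorem tiltMoment_two_zero : tiltMoment 2 0 = π / 8 := by
  rw [tiltMoment_apply_zero, integral_pow_mul_sqrt_one_sub_sq,
    integral_sin_pow_add_two_neg_pi_div_two 0]
  norm_num
  ring

theorem tiltMoment_four_zero : tiltMoment 4 0 = π / 16 := by
  rw [tiltMoment_apply_zero, integral_pow_mul_sqrt_one_sub_sq,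
    integral_sin_pow_add_two_neg_pi_div_two 2, integral_sin_pow_add_two_neg_pi_div_two 0]
  norm_num
  ring

theorem tiltE_pow (lam : ℝ) (n : ℕ) :
    tiltE lam (fun x => x ^ n) = tiltMoment n lam / tiltMoment 0 lam := by
  simp [tiltE, tiltMoment, tiltZ, div_eq_inv_mul]

theorem tiltCov_id_sq (lam : ℝ) :
    tiltCov lam (fun x => x) (fun x => x ^ 2) =
      tiltMoment 3 lam / tiltMoment 0 lam -
        tiltMoment 1 lam / tiltMoment 0 lam * (tiltMoment 2 lam / tiltMoment 0 lam) := by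
  simp only [tiltCov, ← tiltE_pow]
  congr 3 <;> funext x <;> ring

/-- Taylor expansion of the tilted covariance at `λ = 0`: it vanishes at `0`
and is differentiable there with derivative `1/16`. -/
theorem tiltCov_taylor_at_zero :
    tiltCov 0 (fun x => x) (fun x => x ^ 2) = 0 ∧
    HasDerivAt (fun lam => tiltCov lam (fun x => x) (fun x => x ^ 2)) (1 / 16) 0 := by
  have h1 := tiltMoment_odd_zero (n := 1) odd_one
  have h3 := tiltMoment_odd_zero (n := 3) (by decide)
  have hZ : tiltMoment 0 0 ≠ 0 := by rw [tiltMoment_zero_zero]; positivity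
  refine ⟨by simp [tiltCov_id_sq, h1, h3], ?_⟩
  have hD := ((hasDerivAt_tiltMoment 3 0).div (hasDerivAt_tiltMoment 0 0) hZ).sub
    (((hasDerivAt_tiltMoment 1 0).div (hasDerivAt_tiltMoment 0 0) hZ).mul
      ((hasDerivAt_tiltMoment 2 0).div (hasDerivAt_tiltMoment 0 0) hZ))
  rw [funext tiltCov_id_sq]
  refine hD.congr_deriv ?_
  simp only [Pi.div_apply, zero_add]
  rw [h1, h3, tiltMoment_zero_zero, tiltMoment_two_zero, tiltMoment_four_zero]
  field_simp
  ring
end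

section
/- (Kronecker factorization; the statable core of Theorem A.) Let P be a monic polynomial with integer coefficients such that every complex root of P (i.e. every root of the image of P in ℂ[X]) has absolute value exactly 1. Then P factors completely into cyclotomic polynomials: there exists a finite multiset S of positive natural numbers such that P = ∏_{n ∈ S} Φ_n in ℤ[X], where Φ_n denotes the n-th cyclotomic polynomial. -/
/-!
A monic polynomial whose complex roots lie in the closed unit disk has Mahler measure `1`.
By Kronecker's theorem, an integer polynomial of Mahler measure `1`, of positive degree and not
divisible by `X`, is divisible by some cyclotomic polynomial `Φ_n`. Since `Φ_n` has Mahler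
measure `1` and the Mahler measure is multiplicative, the cofactor again has Mahler measure `1`,
so induction on the degree splits off all the cyclotomic factors.
-/

open Polynomial

namespace Polynomial

theorem Monic.mahlerMeasure_eq_one_of_norm_root_le_one {p : ℂ[X]} (hp : p.Monic)
    (h : ∀ z, p.IsRoot z → ‖z‖ ≤ 1) : p.mahlerMeasure = 1 := by
  rw [mahlerMeasure_eq_leadingCoeff_mul_prod_roots, hp.leadingCoeff, norm_one, one_mul]
  refine Multiset.prod_eq_one fun x hx => ?_
  obtain ⟨z, hz, rfl⟩ := Multiset.mem_map.mp hx
  exact max_eq_left (h z (isRoot_of_mem_roots hz))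

theorem mahlerMeasure_map_cyclotomic_mul (n : ℕ) (q : ℤ[X]) :
    ((cyclotomic n ℤ * q).map (Int.castRingHom ℂ)).mahlerMeasure =
      (q.map (Int.castRingHom ℂ)).mahlerMeasure := by
  rw [Polynomial.map_mul, mahlerMeasure_mul, ← algebraMap_int_eq,
    cyclotomic_mahlerMeasure_eq_one, one_mul]

theorem Monic.exists_multiset_prod_cyclotomic_of_mahlerMeasure_eq_one {p : ℤ[X]} (hp : p.Monic)
    (hX : ¬ X ∣ p) (h : (p.map (Int.castRingHom ℂ)).mahlerMeasure = 1) :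
    ∃ S : Multiset ℕ+, p = (S.map fun n => cyclotomic (n : ℕ) ℤ).prod := by
  induction hd : p.natDegree using Nat.strong_induction_on generalizing p with
  | _ d ih =>
  rcases eq_or_ne p.degree 0 with hdeg | hdeg
  · exact ⟨0, hp.natDegree_eq_zero.mp (natDegree_eq_of_degree_eq_some hdeg)⟩
  obtain ⟨n, hn, q, rfl⟩ := cyclotomic_dvd_of_mahlerMeasure_eq_one h hX hdeg
  have hq : q.Monic := (cyclotomic.monic n ℤ).of_mul_monic_left hp
  have hdq : q.natDegree < d := by
    rw [← hd, (cyclotomic.monic n ℤ).natDegree_mul hq, natDegree_cyclotomic]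
    have := Nat.totient_pos.mpr hn
    omega
  obtain ⟨S, rfl⟩ := ih _ hdq hq (fun hXq => hX (hXq.mul_left _))
    (by rwa [mahlerMeasure_map_cyclotomic_mul] at h) rfl
  lift n to ℕ+ using hn
  exact ⟨n ::ₘ S, by simp⟩

end Polynomial

/-- Kronecker factorization (the statable core of Theorem A): a monic integer
polynomial all of whose complex roots have absolute value exactly 1 factors
completely into cyclotomic polynomials, i.e. it is the product of a finite
multiset of cyclotomic polynomials `Φ_n` with `n` a positive natural number. -/
theorem kronecker_cyclotomic_factorization (P : Polynomial ℤ) (hP : P.Monic)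
    (hroots : ∀ z : ℂ, (P.map (Int.castRingHom ℂ)).IsRoot z → ‖z‖ = 1) :
    ∃ S : Multiset ℕ+, P = (S.map fun n => cyclotomic (n : ℕ) ℤ).prod := by
  have hX : ¬ X ∣ P := by
    intro hX
    have h0 : (P.map (Int.castRingHom ℂ)).IsRoot 0 := by
      rw [IsRoot, ← coeff_zero_eq_eval_zero, coeff_map, X_dvd_iff.mp hX, map_zero]
    simpa using hroots 0 h0
  exact hP.exists_multiset_prod_cyclotomic_of_mahlerMeasure_eq_one hX
    ((hP.map _).mahlerMeasure_eq_one_of_norm_root_le_one fun z hz => (hroots z hz).le)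
end
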